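/- Let G be a torsion GGS group and H < G a proper subgroup of type II generated by a finite set S, and let M be the maximal b-length of elements of S. Then for every first-level vertex v, the subgroup φ_v(H) is generated by the set φ_v(S), all of whose elements have b-length at most (M+1)/2. In particular, if M > 1 then the elements of φ_v(S) all have b-length strictly less than M. -/

import Mathlib

/-- Vertices of the rooted regular tree over alphabet `A`: finite words in `A`. -/
abbrev Vert (A : Type*) := List A

/-- The automorphism group of the rooted regular tree with vertex set `Vert A`:
length-preserving permutations of the vertices that preserve the prefix order. -/
def treeAut (A : Type*) : Subgroup (Equiv.Perm (Vert A)) where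
  carrier := { g | (∀ v : Vert A, (g v).length = v.length) ∧
    ∀ v w : Vert A, v <+: w ↔ g v <+: g w }
  one_mem' := ⟨fun _ => rfl, fun _ _ => Iff.rfl⟩
  mul_mem' := by
    rintro g h ⟨hg1, hg2⟩ ⟨hh1, hh2⟩
    refine ⟨fun v => ?_, fun v w => ?_⟩
    · simp only [Equiv.Perm.mul_apply, hg1, hh1]
    · simpa only [Equiv.Perm.mul_apply] using (hh2 v w).trans (hg2 (h v) (h w))
  inv_mem' := by
    rintro g ⟨hg1, hg2⟩
    refine ⟨fun v => ?_, fun v w => ?_⟩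
    · have h1 := hg1 (g⁻¹ v)
      rw [(show ∀ x, g (g⁻¹ x) = x from fun x => g.apply_symm_apply x)] at h1
      exact h1.symm
    · have h2 := hg2 (g⁻¹ v) (g⁻¹ w)
      rw [(show ∀ x, g (g⁻¹ x) = x from fun x => g.apply_symm_apply x), (show ∀ x, g (g⁻¹ x) = x from fun x => g.apply_symm_apply x)] at h2
      exact h2.symm

open scoped Classical in
/-- The section `φ_v(g)` of an automorphism `g` at the vertex `v`: the unique
permutation `s` with `g (v ++ w) = g v ++ s w` for all `w` (it exists and is unique
whenever `g` is a tree automorphism). -/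
noncomputable def sect {A : Type*} (g : Equiv.Perm (Vert A)) (v : Vert A) :
    Equiv.Perm (Vert A) :=
  if h : ∃ s : Equiv.Perm (Vert A), ∀ w : Vert A, g (v ++ w) = g v ++ s w then h.choose else 1

/-- The `n`-th level of the tree: words of length `n`. -/
def level (A : Type*) (n : ℕ) : Set (Vert A) := { v | v.length = n }

/-- The pointwise stabilizer in `G` of a set `S` of vertices. -/
def stabSet {A : Type*} (G : Subgroup (Equiv.Perm (Vert A))) (S : Set (Vert A)) :
    Subgroup (Equiv.Perm (Vert A)) where
  carrier := { g | g ∈ G ∧ ∀ v ∈ S, g v = v }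
  one_mem' := ⟨G.one_mem, fun _ _ => rfl⟩
  mul_mem' := by
    rintro g h ⟨hg, hg2⟩ ⟨hh, hh2⟩
    exact ⟨G.mul_mem hg hh, fun v hv => by
      simp only [Equiv.Perm.mul_apply, hh2 v hv, hg2 v hv]⟩
  inv_mem' := by
    rintro g ⟨hg, hg2⟩
    refine ⟨G.inv_mem hg, fun v hv => ?_⟩
    conv_lhs => rw [← hg2 v hv]
    exact g.symm_apply_apply v

/-- The stabilizer in `G` of a single vertex `v`. -/
def vstab {A : Type*} (G : Subgroup (Equiv.Perm (Vert A))) (v : Vert A) :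
    Subgroup (Equiv.Perm (Vert A)) := stabSet G {v}

/-- The pointwise stabilizer in `G` of the `n`-th level. -/
def lstab {A : Type*} (G : Subgroup (Equiv.Perm (Vert A))) (n : ℕ) :
    Subgroup (Equiv.Perm (Vert A)) := stabSet G (level A n)

/-- The rigid stabilizer of a vertex `v` in `G`: elements of `G` acting trivially
outside the subtree rooted at `v`. -/
def rist {A : Type*} (G : Subgroup (Equiv.Perm (Vert A))) (v : Vert A) :
    Subgroup (Equiv.Perm (Vert A)) where
  carrier := { g | g ∈ G ∧ ∀ w : Vert A, ¬ v <+: w → g w = w }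
  one_mem' := ⟨G.one_mem, fun _ _ => rfl⟩
  mul_mem' := by
    rintro g h ⟨hg, hg2⟩ ⟨hh, hh2⟩
    exact ⟨G.mul_mem hg hh, fun w hw => by
      simp only [Equiv.Perm.mul_apply, hh2 w hw, hg2 w hw]⟩
  inv_mem' := by
    rintro g ⟨hg, hg2⟩
    refine ⟨G.inv_mem hg, fun w hw => ?_⟩
    conv_lhs => rw [← hg2 w hw]
    exact g.symm_apply_apply w

/-- The rigid stabilizer of the `n`-th level: the subgroup generated by the rigid
stabilizers of the vertices of level `n`. -/
def ristLevel {A : Type*} (G : Subgroup (Equiv.Perm (Vert A))) (n : ℕ) :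
    Subgroup (Equiv.Perm (Vert A)) := ⨆ v ∈ level A n, rist G v

/-- The subgroup `φ_v(H)` generated by (equivalently, consisting of, when `H`
stabilizes `v`) the sections at `v` of the elements of `H`. -/
def sectGrp {A : Type*} (H : Subgroup (Equiv.Perm (Vert A))) (v : Vert A) :
    Subgroup (Equiv.Perm (Vert A)) :=
  Subgroup.closure ((fun g => sect g v) '' (H : Set (Equiv.Perm (Vert A))))

/-- A transversal of the tree: a finite set of vertices met exactly once by every
infinite ray from the root. -/
def IsTransversal (A : Type*) (X : Set (Vert A)) : Prop :=
  X.Finite ∧ ∀ ω : ℕ → A, ∃! n : ℕ, (List.ofFn fun i : Fin n => ω i.val) ∈ X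

/-- The subgroup induction property. -/
def HasSGIP {A : Type*} (G : Subgroup (Equiv.Perm (Vert A))) : Prop :=
  ∀ H : Subgroup (Equiv.Perm (Vert A)), H ≤ G → H.FG →
    ∃ X : Set (Vert A), IsTransversal A X ∧ ∀ v ∈ X,
      sectGrp (stabSet H X) v = ⊥ ∨
      (sectGrp (stabSet H X) v).relIndex (sectGrp (vstab G v) v) ≠ 0

/-- `G` acts transitively on every level of the tree. -/
def LevelTransitive {A : Type*} (G : Subgroup (Equiv.Perm (Vert A))) : Prop :=
  ∀ v w : Vert A, v.length = w.length → ∃ g ∈ G, g v = w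

/-- Weakly branch: level-transitive with all rigid vertex stabilizers infinite. -/
def IsWeaklyBranch {A : Type*} (G : Subgroup (Equiv.Perm (Vert A))) : Prop :=
  LevelTransitive G ∧ ∀ v : Vert A, (rist G v : Set (Equiv.Perm (Vert A))).Infinite

/-- Branch: weakly branch and every level rigid stabilizer has finite index in `G`. -/
def IsBranch {A : Type*} (G : Subgroup (Equiv.Perm (Vert A))) : Prop :=
  IsWeaklyBranch G ∧ ∀ n : ℕ, (ristLevel G n).relIndex G ≠ 0

/-- Self-similar: all sections of vertex stabilizers land in `G`. -/
def SelfSimilar {A : Type*} (G : Subgroup (Equiv.Perm (Vert A))) : Prop :=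
  ∀ v : Vert A, sectGrp (vstab G v) v ≤ G

/-- Self-replicating: `φ_v(Stab_G(v)) = G` for every vertex `v`. -/
def SelfReplicating {A : Type*} (G : Subgroup (Equiv.Perm (Vert A))) : Prop :=
  ∀ v : Vert A, sectGrp (vstab G v) v = G

/-- Strongly self-replicating: self-similar and `φ_v(Stab_G(L_n)) = G` for every `n`
and every vertex `v` of level `n`. -/
def StronglySelfReplicating {A : Type*} (G : Subgroup (Equiv.Perm (Vert A))) : Prop :=
  SelfSimilar G ∧ ∀ (n : ℕ) (v : Vert A), v.length = n → sectGrp (lstab G n) v = G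

/-- The congruence subgroup property: every finite-index subgroup of `G` contains
some level stabilizer. -/
def HasCSP {A : Type*} (G : Subgroup (Equiv.Perm (Vert A))) : Prop :=
  ∀ K : Subgroup (Equiv.Perm (Vert A)), K ≤ G → K.relIndex G ≠ 0 →
    ∃ n : ℕ, lstab G n ≤ K

/-- A group is just infinite if it is infinite and all its proper quotients are
finite, i.e. every nontrivial normal subgroup has finite index. -/
def JustInfinite (G : Type*) [Group G] : Prop :=
  Infinite G ∧ ∀ N : Subgroup G, N.Normal → N ≠ ⊥ → N.index ≠ 0

/-- `Φ_F(G)`: the intersection of all maximal subgroups of finite index of `G`. -/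
def PhiF (G : Type*) [Group G] : Subgroup G :=
  ⨅ M ∈ { M : Subgroup G | IsCoatom M ∧ M.index ≠ 0 }, M

/-- Two groups are commensurable if they have isomorphic finite-index subgroups. -/
def CommGroups (G₁ : Type*) (G₂ : Type*) [Group G₁] [Group G₂] : Prop :=
  ∃ (H₁ : Subgroup G₁) (H₂ : Subgroup G₂),
    H₁.index ≠ 0 ∧ H₂.index ≠ 0 ∧ Nonempty (H₁ ≃* H₂)
/-- The rooted automorphism `a` of the `p`-regular tree: the cyclic permutation
`(1 2 … p)` of the first level (adding `1` to the first letter). -/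
def aPerm (p : ℕ) : Equiv.Perm (Vert (ZMod p)) where
  toFun := fun l => match l with
    | [] => ([] : Vert (ZMod p))
    | x :: w => (x + 1) :: w
  invFun := fun l => match l with
    | [] => ([] : Vert (ZMod p))
    | x :: w => (x - 1) :: w
  left_inv := by rintro (_ | ⟨x, w⟩) <;> simp
  right_inv := by rintro (_ | ⟨x, w⟩) <;> simp

/-- The recursively defined generator `b = (a^{e_0}, …, a^{e_{p-2}}, b)`. -/
def bFun (p : ℕ) (e : Fin (p - 1) → ZMod p) : Vert (ZMod p) → Vert (ZMod p)
  | [] => []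
  | x :: w =>
    if h : x.val < p - 1 then x :: (aPerm p ^ (e ⟨x.val, h⟩).val) w
    else x :: bFun p e w

/-- Inverse of `bFun`. -/
def bInvFun (p : ℕ) (e : Fin (p - 1) → ZMod p) : Vert (ZMod p) → Vert (ZMod p)
  | [] => []
  | x :: w =>
    if h : x.val < p - 1 then x :: ((aPerm p ^ (e ⟨x.val, h⟩).val)⁻¹ : Equiv.Perm (Vert (ZMod p))) w
    else x :: bInvFun p e w

/-- The generator `b` of the GGS group as a tree automorphism. -/
def bPerm (p : ℕ) (e : Fin (p - 1) → ZMod p) : Equiv.Perm (Vert (ZMod p)) where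
  toFun := bFun p e
  invFun := bInvFun p e
  left_inv := by
    intro l
    induction l with
    | nil => rfl
    | cons x w ih =>
      by_cases h : x.val < p - 1
      · simp [bFun, bInvFun, h]
      · simp [bFun, bInvFun, h, ih]
  right_inv := by
    intro l
    induction l with
    | nil => rfl
    | cons x w ih =>
      by_cases h : x.val < p - 1
      · simp [bFun, bInvFun, h]
      · simp [bFun, bInvFun, h, ih]

/-- The GGS group with defining vector `e`. -/
def GGSGroup (p : ℕ) (e : Fin (p - 1) → ZMod p) : Subgroup (Equiv.Perm (Vert (ZMod p))) :=
  Subgroup.closure {aPerm p, bPerm p e}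

/-- The derived subgroup `G'` of the GGS group, as a subgroup of the ambient
permutation group. -/
def GGSDerived (p : ℕ) (e : Fin (p - 1) → ZMod p) : Subgroup (Equiv.Perm (Vert (ZMod p))) :=
  (commutator ↥(GGSGroup p e)).map (GGSGroup p e).subtype

/-- `g` can be written as `a^{i_1} b^{j_1} ⋯ a^{i_n} b^{j_n} a^{i_{n+1}}`. -/
def bWordLe (p : ℕ) (e : Fin (p - 1) → ZMod p) (g : Equiv.Perm (Vert (ZMod p)))
    (n : ℕ) : Prop :=
  ∃ i j : ℕ → ℤ,
    g = ((List.range n).map fun k => aPerm p ^ i k * bPerm p e ^ j k).prod * aPerm p ^ i n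

/-- The `b`-length `|g|`: the least number of `b`-syllables needed to write `g`. -/
noncomputable def bLen (p : ℕ) (e : Fin (p - 1) → ZMod p)
    (g : Equiv.Perm (Vert (ZMod p))) : ℕ :=
  sInf { n : ℕ | bWordLe p e g n }

/-- The generating set `{a, a², …, a^{p-1}, b, b², …, b^{p-1}}`. -/
def GGSGens (p : ℕ) (e : Fin (p - 1) → ZMod p) : Set (Equiv.Perm (Vert (ZMod p))) :=
  { x | ∃ k : ℕ, 1 ≤ k ∧ k ≤ p - 1 ∧ (x = aPerm p ^ k ∨ x = bPerm p e ^ k) }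

/-- The total length `λ(g)`: word length with respect to all nontrivial powers of
`a` and of `b`. -/
noncomputable def totalLen (p : ℕ) (e : Fin (p - 1) → ZMod p)
    (g : Equiv.Perm (Vert (ZMod p))) : ℕ :=
  sInf { n : ℕ | ∃ f : Fin n → Equiv.Perm (Vert (ZMod p)),
    (∀ k, f k ∈ GGSGens p e) ∧ g = (List.ofFn f).prod }

/-- `α` and `β` are the exponents (mod `p`) with `g ≡ a^α b^β` modulo `G'`. -/
def IsAlphaBeta (p : ℕ) (e : Fin (p - 1) → ZMod p) (g : Equiv.Perm (Vert (ZMod p)))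
    (α β : ℕ) : Prop :=
  α < p ∧ β < p ∧ (aPerm p ^ α * bPerm p e ^ β)⁻¹ * g ∈ GGSDerived p e

/-- `H` is of type II: `HG'/G' = ⟨b^j G'⟩` for some `j ∈ {0,1}`. -/
def TypeII (p : ℕ) (e : Fin (p - 1) → ZMod p)
    (H : Subgroup (Equiv.Perm (Vert (ZMod p)))) : Prop :=
  ∃ j : ℕ, j ≤ 1 ∧
    H ⊔ GGSDerived p e = Subgroup.closure {bPerm p e ^ j} ⊔ GGSDerived p e

/-- `H` is of type III: `HG'/G' = ⟨a b^j G'⟩` for some `j ∈ {0,…,p-1}`. -/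
def TypeIII (p : ℕ) (e : Fin (p - 1) → ZMod p)
    (H : Subgroup (Equiv.Perm (Vert (ZMod p)))) : Prop :=
  ∃ j : ℕ, j < p ∧
    H ⊔ GGSDerived p e = Subgroup.closure {aPerm p * bPerm p e ^ j} ⊔ GGSDerived p e

/-!
A type II subgroup lies in `⟨b⟩G'`, and `G` acts on the first level through translations of
`ZMod p`, so `H` fixes the first level pointwise; there `g ↦ φ_v(g)` is a homomorphism, hence
`φ_v(H)` is generated by `φ_v(S)`. For the length bound write
`g = a^{i_1} b^{j_1} ⋯ a^{i_n} b^{j_n} a^{i_{n+1}}` with `n = |g|`. At a first-level vertex the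
sections of powers of `a` are trivial and the section of `b` is a power of `a` or `b` itself, so
`φ_v(g)` is a product of `n` powers of `a` or `b`. Consecutive powers of `b` merge, which leaves
at most `⌈n/2⌉` `b`-syllables.
-/

open Equiv

section Sections

variable {A : Type*}

theorem sect_eq_of_forall {g s : Perm (Vert A)} {v : Vert A}
    (hs : ∀ w, g (v ++ w) = g v ++ s w) : sect g v = s := by
  have hex : ∃ s : Perm (Vert A), ∀ w, g (v ++ w) = g v ++ s w := ⟨s, hs⟩
  rw [sect, dif_pos hex]
  exact Equiv.ext fun w => List.append_cancel_left ((hex.choose_spec w).symm.trans (hs w))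

def sectSubgroup (A : Type*) : Subgroup (Perm (Vert A)) where
  carrier := {g | ∀ v : Vert A, ∃ s : Perm (Vert A), ∀ w, g (v ++ w) = g v ++ s w}
  one_mem' := fun _ => ⟨1, fun _ => rfl⟩
  mul_mem' := by
    rintro g h hg hh v
    obtain ⟨sh, hsh⟩ := hh v
    obtain ⟨sg, hsg⟩ := hg (h v)
    exact ⟨sg * sh, fun w => by simp only [Perm.mul_apply, hsh, hsg]⟩
  inv_mem' := by
    rintro g hg v
    obtain ⟨s, hs⟩ := hg (g⁻¹ v)
    refine ⟨s⁻¹, fun w => g.injective ?_⟩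
    rw [hs]
    simp only [Perm.coe_inv, Equiv.apply_symm_apply]

theorem apply_append_eq_sect {g : Perm (Vert A)} (hg : g ∈ sectSubgroup A) (v w : Vert A) :
    g (v ++ w) = g v ++ sect g v w := by
  obtain ⟨s, hs⟩ := hg v
  rw [sect_eq_of_forall hs, hs]

theorem sect_mul {g h : Perm (Vert A)} (hg : g ∈ sectSubgroup A) (hh : h ∈ sectSubgroup A)
    (v : Vert A) : sect (g * h) v = sect g (h v) * sect h v :=
  sect_eq_of_forall fun w => by
    simp only [Perm.mul_apply, apply_append_eq_sect hh, apply_append_eq_sect hg]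

noncomputable def sectHom (v : Vert A) :
    ↥(sectSubgroup A ⊓ MulAction.stabilizer (Perm (Vert A)) v) →* Perm (Vert A) where
  toFun g := sect g v
  map_one' := sect_eq_of_forall fun _ => rfl
  map_mul' g h := by
    have hv : (h : Perm (Vert A)) v = v := h.2.2
    rw [Subgroup.coe_mul, sect_mul g.2.1 h.2.1, hv]

theorem sect_zpow_of_apply_eq {g : Perm (Vert A)} (hg : g ∈ sectSubgroup A) {v : Vert A}
    (hv : g v = v) (z : ℤ) : sect (g ^ z) v = sect g v ^ z :=
  map_zpow (sectHom v) ⟨g, hg, hv⟩ z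

theorem closure_image_sect_closure {S : Set (Perm (Vert A))} {v : Vert A}
    (hS : Subgroup.closure S ≤ sectSubgroup A ⊓ MulAction.stabilizer (Perm (Vert A)) v) :
    Subgroup.closure ((sect · v) '' Subgroup.closure S) =
      Subgroup.closure ((sect · v) '' S) := by
  refine le_antisymm ?_ (Subgroup.closure_mono (Set.image_mono Subgroup.subset_closure))
  rw [Subgroup.closure_le]
  rintro _ ⟨g, hg, rfl⟩
  induction hg using Subgroup.closure_induction with
  | mem g hg => exact Subgroup.subset_closure ⟨g, hg, rfl⟩
  | one =>
    change sectHom v 1 ∈ _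
    exact (map_one (sectHom v)).symm ▸ Subgroup.one_mem _
  | mul g h hg hh ihg ihh =>
    change sectHom v (⟨g, hS hg⟩ * ⟨h, hS hh⟩) ∈ _
    exact (map_mul (sectHom v) _ _).symm ▸ Subgroup.mul_mem _ ihg ihh
  | inv g hg ihg =>
    change sectHom v ⟨g, hS hg⟩⁻¹ ∈ _
    exact (map_inv (sectHom v) _).symm ▸ Subgroup.inv_mem _ ihg

end Sections

section GGS

variable {p : ℕ} {e : Fin (p - 1) → ZMod p}

theorem aPerm_inv_cons (x : ZMod p) (w : Vert (ZMod p)) :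
    (aPerm p)⁻¹ (x :: w) = (x - 1) :: w :=
  rfl

theorem aPerm_zpow_cons (z : ℤ) (x : ZMod p) (w : Vert (ZMod p)) :
    (aPerm p ^ z) (x :: w) = (x + z) :: w := by
  induction z using Int.induction_on generalizing x with
  | zero => simp
  | succ k ih =>
    rw [zpow_add_one, Perm.mul_apply, show aPerm p (x :: w) = (x + 1) :: w from rfl, ih]
    push_cast; ring_nf
  | pred k ih =>
    rw [zpow_sub_one, Perm.mul_apply, aPerm_inv_cons, ih]
    push_cast; ring_nf

theorem bPerm_singleton (x : ZMod p) : bPerm p e [x] = [x] := by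
  change bFun p e [x] = [x]
  by_cases h : x.val < p - 1
  · simp only [bFun, dif_pos h]
    rw [Perm.pow_apply_eq_self_of_apply_eq_self rfl]
  · simp only [bFun, dif_neg h]

theorem aPerm_mem_sectSubgroup : aPerm p ∈ sectSubgroup (ZMod p) := by
  rintro (_ | ⟨x, u⟩)
  · exact ⟨aPerm p, fun _ => rfl⟩
  · exact ⟨1, fun _ => rfl⟩

theorem bPerm_mem_sectSubgroup : bPerm p e ∈ sectSubgroup (ZMod p) := by
  intro v
  induction v with
  | nil => exact ⟨bPerm p e, fun _ => rfl⟩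
  | cons x u ih =>
    by_cases h : x.val < p - 1
    · obtain ⟨s, hs⟩ := pow_mem aPerm_mem_sectSubgroup (e ⟨x.val, h⟩).val u
      refine ⟨s, fun w => ?_⟩
      change bFun p e (x :: (u ++ w)) = bFun p e (x :: u) ++ s w
      simp only [bFun, dif_pos h, hs, List.cons_append]
    · obtain ⟨s, hs⟩ := ih
      refine ⟨s, fun w => ?_⟩
      change bFun p e (x :: (u ++ w)) = bFun p e (x :: u) ++ s w
      simp only [bFun, dif_neg h, List.cons_append]
      exact congrArg (x :: ·) (hs w)

theorem GGSGroup_le_sectSubgroup : GGSGroup p e ≤ sectSubgroup (ZMod p) := by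
  rw [GGSGroup, Subgroup.closure_le, Set.insert_subset_iff, Set.singleton_subset_iff]
  exact ⟨aPerm_mem_sectSubgroup, bPerm_mem_sectSubgroup⟩

def shiftSubgroup (p : ℕ) : Subgroup (Perm (Vert (ZMod p))) where
  carrier := {g | ∃ c : ZMod p, ∀ x : ZMod p, g [x] = [x + c]}
  one_mem' := ⟨0, fun x => by simp⟩
  mul_mem' := by
    rintro g h ⟨cg, hcg⟩ ⟨ch, hch⟩
    exact ⟨ch + cg, fun x => by rw [Perm.mul_apply, hch, hcg, add_assoc]⟩
  inv_mem' := by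
    rintro g ⟨c, hc⟩
    exact ⟨-c, fun x => Perm.inv_eq_iff_eq.mpr (by rw [hc, neg_add_cancel_right])⟩

theorem GGSGroup_le_shiftSubgroup : GGSGroup p e ≤ shiftSubgroup p := by
  rw [GGSGroup, Subgroup.closure_le, Set.insert_subset_iff, Set.singleton_subset_iff]
  exact ⟨⟨1, fun _ => rfl⟩, ⟨0, fun x => by rw [bPerm_singleton, add_zero]⟩⟩

/-- Translations commute, so commutators act trivially on the first level. -/
theorem commutator_shiftSubgroup_le_stabilizer (x : ZMod p) :
    ⁅shiftSubgroup p, shiftSubgroup p⁆ ≤ MulAction.stabilizer (Perm (Vert (ZMod p))) [x] := by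
  rw [Subgroup.commutator_le]
  rintro g ⟨cg, hcg⟩ h ⟨ch, hch⟩
  have hinv : ∀ {k : Perm (Vert (ZMod p))} {c : ZMod p}, (∀ y, k [y] = [y + c]) →
      ∀ y, k⁻¹ [y] = [y - c] :=
    fun hk y => Perm.inv_eq_iff_eq.mpr (by rw [hk, sub_add_cancel])
  rw [MulAction.mem_stabilizer_iff, Perm.smul_def, commutatorElement_def]
  simp only [Perm.mul_apply, hinv hch, hinv hcg, hch, hcg]
  ring_nf

theorem GGSDerived_le_stabilizer (x : ZMod p) :
    GGSDerived p e ≤ MulAction.stabilizer (Perm (Vert (ZMod p))) [x] := by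
  rw [GGSDerived, commutator_def, Subgroup.map_commutator, ← MonoidHom.range_eq_map,
    Subgroup.range_subtype]
  exact (Subgroup.commutator_mono GGSGroup_le_shiftSubgroup GGSGroup_le_shiftSubgroup).trans
    (commutator_shiftSubgroup_le_stabilizer x)

theorem TypeII.le_stabilizer {H : Subgroup (Perm (Vert (ZMod p)))} (hH : TypeII p e H)
    (x : ZMod p) : H ≤ MulAction.stabilizer (Perm (Vert (ZMod p))) [x] := by
  obtain ⟨j, -, hj⟩ := hH
  have hb : bPerm p e ^ j ∈ MulAction.stabilizer (Perm (Vert (ZMod p))) [x] :=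
    pow_mem (bPerm_singleton x) j
  calc H ≤ H ⊔ GGSDerived p e := le_sup_left
    _ = Subgroup.closure {bPerm p e ^ j} ⊔ GGSDerived p e := hj
    _ ≤ _ := sup_le ((Subgroup.closure_le _).mpr (Set.singleton_subset_iff.mpr hb))
      (GGSDerived_le_stabilizer x)

end GGS

section BLength

variable {p : ℕ} {e : Fin (p - 1) → ZMod p}

theorem bWordLe_zero_iff {g : Perm (Vert (ZMod p))} :
    bWordLe p e g 0 ↔ ∃ z : ℤ, g = aPerm p ^ z := by
  simp only [bWordLe, List.range_zero, List.map_nil, List.prod_nil, one_mul]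
  exact ⟨fun ⟨i, _, h⟩ => ⟨i 0, h⟩, fun ⟨z, h⟩ => ⟨fun _ => z, fun _ => 0, h⟩⟩

theorem bWordLe_succ_iff {g : Perm (Vert (ZMod p))} {n : ℕ} :
    bWordLe p e g (n + 1) ↔
      ∃ (z y : ℤ) (g' : Perm (Vert (ZMod p))),
        bWordLe p e g' n ∧ g = aPerm p ^ z * bPerm p e ^ y * g' := by
  simp only [bWordLe, List.range_succ_eq_map, List.map_cons, List.prod_cons, List.map_map]
  constructor
  · rintro ⟨i, j, rfl⟩
    exact ⟨i 0, j 0, _, ⟨fun k => i (k + 1), fun k => j (k + 1), rfl⟩,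
      by simp only [mul_assoc]; rfl⟩
  · rintro ⟨z, y, _, ⟨i, j, rfl⟩, rfl⟩
    exact ⟨fun | 0 => z | k + 1 => i k, fun | 0 => y | k + 1 => j k,
      by simp only [mul_assoc]; rfl⟩

theorem bWordLe_aPerm_zpow_mul {g : Perm (Vert (ZMod p))} {n : ℕ} (z : ℤ)
    (hg : bWordLe p e g n) : bWordLe p e (aPerm p ^ z * g) n := by
  cases n with
  | zero =>
    obtain ⟨z', rfl⟩ := bWordLe_zero_iff.mp hg
    exact bWordLe_zero_iff.mpr ⟨z + z', (zpow_add _ _ _).symm⟩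
  | succ n =>
    obtain ⟨z', y, g', hg', rfl⟩ := bWordLe_succ_iff.mp hg
    exact bWordLe_succ_iff.mpr ⟨z + z', y, g', hg', by rw [zpow_add]; group⟩

theorem bWordLe_bPerm_zpow_mul {g : Perm (Vert (ZMod p))} {n : ℕ} (y : ℤ)
    (hg : bWordLe p e g n) : bWordLe p e (bPerm p e ^ y * g) (n + 1) :=
  bWordLe_succ_iff.mpr ⟨0, y, g, hg, by rw [zpow_zero, one_mul]⟩

theorem exists_bWordLe_of_mem {g : Perm (Vert (ZMod p))} (hg : g ∈ GGSGroup p e) :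
    ∃ n, bWordLe p e g n := by
  have hgen : ∀ s ∈ ({aPerm p, bPerm p e} : Set (Perm (Vert (ZMod p)))), ∀ k : ℤ,
      ∀ g, (∃ n, bWordLe p e g n) → ∃ n, bWordLe p e (s ^ k * g) n := by
    rintro s (rfl | rfl) k g ⟨n, hn⟩
    · exact ⟨n, bWordLe_aPerm_zpow_mul k hn⟩
    · exact ⟨n + 1, bWordLe_bPerm_zpow_mul k hn⟩
  induction hg using Subgroup.closure_induction_left with
  | one => exact ⟨0, bWordLe_zero_iff.mpr ⟨0, (zpow_zero _).symm⟩⟩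
  | mul_left s hs g _ ih => simpa using hgen s hs 1 g ih
  | inv_mul_cancel s hs g _ ih => simpa using hgen s hs (-1) g ih

theorem bWordLe_bLen {g : Perm (Vert (ZMod p))} (hg : g ∈ GGSGroup p e) :
    bWordLe p e g (bLen p e g) :=
  Nat.sInf_mem (exists_bWordLe_of_mem hg)

theorem bLen_le {g : Perm (Vert (ZMod p))} {n : ℕ} (hg : bWordLe p e g n) : bLen p e g ≤ n :=
  Nat.sInf_le hg

end BLength

section SectionsOfWords

variable {p : ℕ} {e : Fin (p - 1) → ZMod p}

def abPowers (p : ℕ) (e : Fin (p - 1) → ZMod p) : Set (Perm (Vert (ZMod p))) :=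
  (Subgroup.zpowers (aPerm p) : Set (Perm (Vert (ZMod p)))) ∪ Subgroup.zpowers (bPerm p e)

/-- Consecutive powers of `b` in the product merge; the second alternative keeps a leading
power of `b` apart, since it can still absorb the next factor. -/
theorem exists_bWordLe_prod_or_bPerm_zpow_mul (l : List (Perm (Vert (ZMod p))))
    (hl : ∀ c ∈ l, c ∈ abPowers p e) :
    ∃ m, (bWordLe p e l.prod m ∧ 2 * m ≤ l.length) ∨
      ∃ (y : ℤ) (g : Perm (Vert (ZMod p))),
        l.prod = bPerm p e ^ y * g ∧ bWordLe p e g m ∧ 2 * m < l.length := by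
  induction l with
  | nil => exact ⟨0, Or.inl ⟨bWordLe_zero_iff.mpr ⟨0, (zpow_zero _).symm⟩, le_rfl⟩⟩
  | cons c l ih =>
    obtain ⟨hc, hl⟩ := List.forall_mem_cons.mp hl
    rw [List.prod_cons, List.length_cons]
    obtain ⟨m, ⟨hw, hm⟩ | ⟨y, g, hprod, hw, hm⟩⟩ := ih hl <;>
      rcases hc with ⟨z, rfl⟩ | ⟨z, rfl⟩
    · exact ⟨m, Or.inl ⟨bWordLe_aPerm_zpow_mul z hw, by omega⟩⟩
    · exact ⟨m, Or.inr ⟨z, l.prod, rfl, hw, by omega⟩⟩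
    · refine ⟨m + 1, Or.inl ⟨?_, by omega⟩⟩
      rw [hprod]
      exact bWordLe_aPerm_zpow_mul z (bWordLe_bPerm_zpow_mul y hw)
    · exact ⟨m, Or.inr ⟨z + y, g, by rw [hprod, ← mul_assoc, ← zpow_add], hw, by omega⟩⟩

theorem exists_bWordLe_prod (l : List (Perm (Vert (ZMod p))))
    (hl : ∀ c ∈ l, c ∈ abPowers p e) :
    ∃ m, bWordLe p e l.prod m ∧ 2 * m ≤ l.length + 1 := by
  obtain ⟨m, ⟨hw, hm⟩ | ⟨y, g, hprod, hw, hm⟩⟩ := exists_bWordLe_prod_or_bPerm_zpow_mul l hl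
  · exact ⟨m, hw, by omega⟩
  · exact ⟨m + 1, hprod ▸ bWordLe_bPerm_zpow_mul y hw, by omega⟩

theorem mem_GGSGroup_of_bWordLe {g : Perm (Vert (ZMod p))} {n : ℕ} (hg : bWordLe p e g n) :
    g ∈ GGSGroup p e := by
  have ha : aPerm p ∈ GGSGroup p e := Subgroup.subset_closure (Set.mem_insert _ _)
  have hb : bPerm p e ∈ GGSGroup p e := Subgroup.subset_closure (Set.mem_insert_of_mem _ rfl)
  obtain ⟨i, j, rfl⟩ := hg
  refine mul_mem (list_prod_mem fun c hc => ?_) (zpow_mem ha _)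
  obtain ⟨k, -, rfl⟩ := List.mem_map.mp hc
  exact mul_mem (zpow_mem ha _) (zpow_mem hb _)

theorem sect_aPerm_zpow_singleton (z : ℤ) (x : ZMod p) : sect (aPerm p ^ z) [x] = 1 :=
  sect_eq_of_forall fun w => by
    change (aPerm p ^ z) (x :: w) = (aPerm p ^ z) [x] ++ w
    rw [aPerm_zpow_cons, aPerm_zpow_cons]
    rfl

theorem sect_bPerm_singleton (x : ZMod p) :
    sect (bPerm p e) [x] ∈ Subgroup.zpowers (aPerm p) ∨ sect (bPerm p e) [x] = bPerm p e := by
  by_cases h : x.val < p - 1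
  · refine Or.inl ⟨(e ⟨x.val, h⟩).val, (sect_eq_of_forall fun w => ?_).symm⟩
    change bFun p e (x :: w) = bPerm p e [x] ++ _
    simp [bFun, dif_pos h, bPerm_singleton]
  · refine Or.inr (sect_eq_of_forall fun w => ?_)
    change bFun p e (x :: w) = bPerm p e [x] ++ bFun p e w
    simp [bFun, dif_neg h, bPerm_singleton]

theorem sect_bPerm_zpow_singleton_mem (y : ℤ) (x : ZMod p) :
    sect (bPerm p e ^ y) [x] ∈ abPowers p e := by
  rw [sect_zpow_of_apply_eq bPerm_mem_sectSubgroup (bPerm_singleton x)]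
  rcases sect_bPerm_singleton (e := e) x with h | h
  · exact Or.inl (zpow_mem h y)
  · rw [h]
    exact Or.inr (Subgroup.zpow_mem_zpowers _ y)

/-- Each `b`-syllable contributes one factor: sections of powers of `a` at first-level
vertices are trivial. -/
theorem exists_sect_singleton_eq_prod {g : Perm (Vert (ZMod p))} {n : ℕ}
    (hg : bWordLe p e g n) (x : ZMod p) :
    ∃ l : List (Perm (Vert (ZMod p))),
      l.length = n ∧ (∀ c ∈ l, c ∈ abPowers p e) ∧ sect g [x] = l.prod := by
  induction n generalizing g with
  | zero =>
    obtain ⟨z, rfl⟩ := bWordLe_zero_iff.mp hg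
    exact ⟨[], rfl, fun _ h => absurd h List.not_mem_nil, sect_aPerm_zpow_singleton z x⟩
  | succ n ih =>
    obtain ⟨z, y, g', hg', rfl⟩ := bWordLe_succ_iff.mp hg
    obtain ⟨l, hlen, hl, hsect⟩ := ih hg'
    have hgG := mem_GGSGroup_of_bWordLe hg'
    obtain ⟨c, hc⟩ := GGSGroup_le_shiftSubgroup hgG
    have ha := zpow_mem (aPerm_mem_sectSubgroup (p := p)) z
    have hb := zpow_mem (bPerm_mem_sectSubgroup (e := e)) y
    refine ⟨sect (bPerm p e ^ y) [x + c] :: l, by rw [List.length_cons, hlen],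
      List.forall_mem_cons.mpr ⟨sect_bPerm_zpow_singleton_mem y _, hl⟩, ?_⟩
    rw [sect_mul (mul_mem ha hb) (GGSGroup_le_sectSubgroup hgG), sect_mul ha hb, hc,
      Perm.zpow_apply_eq_self_of_apply_eq_self (bPerm_singleton _), sect_aPerm_zpow_singleton,
      one_mul, hsect, List.prod_cons]

theorem two_mul_bLen_sect_singleton_le {g : Perm (Vert (ZMod p))} (hg : g ∈ GGSGroup p e)
    (x : ZMod p) : 2 * bLen p e (sect g [x]) ≤ bLen p e g + 1 := by
  obtain ⟨l, hlen, hl, hsect⟩ := exists_sect_singleton_eq_prod (bWordLe_bLen hg) x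
  obtain ⟨m, hm, hmlen⟩ := exists_bWordLe_prod l hl
  have := bLen_le (hsect ▸ hm)
  omega

end SectionsOfWords

theorem statement14_general (p : ℕ)
    (e : Fin (p - 1) → ZMod p)
    (H : Subgroup (Equiv.Perm (Vert (ZMod p)))) (hHG : H < GGSGroup p e)
    (hII : TypeII p e H)
    (S : Set (Equiv.Perm (Vert (ZMod p))))
    (hSgen : Subgroup.closure S = H)
    (M : ℕ) (hM : IsGreatest (bLen p e '' S) M) :
    ∀ v : Vert (ZMod p), v.length = 1 →
      sectGrp H v = Subgroup.closure ((fun g => sect g v) '' S) ∧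
      (∀ g ∈ (fun g => sect g v) '' S, 2 * bLen p e g ≤ M + 1) ∧
      (1 < M → ∀ g ∈ (fun g => sect g v) '' S, bLen p e g < M) := by
  intro v hv
  obtain ⟨x, rfl⟩ := List.length_eq_one_iff.mp hv
  have hbound : ∀ g ∈ S, 2 * bLen p e (sect g [x]) ≤ M + 1 := fun g hg =>
    have hgG : g ∈ GGSGroup p e := hHG.le (hSgen ▸ Subgroup.subset_closure hg)
    (two_mul_bLen_sect_singleton_le hgG x).trans (Nat.succ_le_succ (hM.2 ⟨g, hg, rfl⟩))
  refine ⟨?_, ?_, ?_⟩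
  · rw [sectGrp, ← hSgen]
    exact closure_image_sect_closure
      (hSgen ▸ le_inf (hHG.le.trans GGSGroup_le_sectSubgroup) (hII.le_stabilizer x))
  · rintro _ ⟨g, hg, rfl⟩
    exact hbound g hg
  · rintro hM1 _ ⟨g, hg, rfl⟩
    have := hbound g hg
    change bLen p e (sect g [x]) < M
    omega

/-- Lemma 4.10: for a proper type II subgroup `H` of a torsion GGS group generated
by a finite set `S` with maximal `b`-length `M`, for every first-level vertex `v`
the subgroup `φ_v(H)` is generated by `φ_v(S)`, whose elements have `b`-length at
most `(M+1)/2` (stated multiplied by 2); in particular, strictly less than `M`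
when `M > 1`. -/
theorem statement14 (p : ℕ) (hp : p.Prime) (hodd : Odd p)
    (e : Fin (p - 1) → ZMod p) (he : e ≠ 0)
    (htor : ∀ g ∈ GGSGroup p e, IsOfFinOrder g)
    (H : Subgroup (Equiv.Perm (Vert (ZMod p)))) (hHG : H < GGSGroup p e)
    (hII : TypeII p e H)
    (S : Set (Equiv.Perm (Vert (ZMod p)))) (hSfin : S.Finite)
    (hSgen : Subgroup.closure S = H)
    (M : ℕ) (hM : IsGreatest (bLen p e '' S) M) :
    ∀ v : Vert (ZMod p), v.length = 1 →
      sectGrp H v = Subgroup.closure ((fun g => sect g v) '' S) ∧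
      (∀ g ∈ (fun g => sect g v) '' S, 2 * bLen p e g ≤ M + 1) ∧
      (1 < M → ∀ g ∈ (fun g => sect g v) '' S, bLen p e g < M) :=
  statement14_general p e H hHG hII S hSgen M hM
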